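/- Under the hypotheses of the preceding bound (T > 0, D_A, D_B, D_C > 0, γ ≥ 0, bounded measurable sources f_A, f_B with M_0 = max(T·sup|f_A|, T·sup|f_B|) > 0, and (A_i), (B_i), (C_i) bounded measurable functions on ℝ × [0, T] satisfying the heat-kernel convolution recursion of the perturbation method), for every real λ with 0 < λ < 1/(T(12 M_0 + 10 γ)): the series Σ_{i=0}^{∞} λ^i A_i(x,t) converges absolutely for every (x, t) ∈ ℝ × [0, T], and the convergence is uniform, with the tail bound sup_{x, t ∈ [0,T]} Σ_{i=N}^{∞} λ^i |A_i(x,t)| ≤ M_0 / 2^{N−1} for every N ≥ 0; the same holds for (B_i) and (C_i). -/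

import Mathlib

/-!
The heat kernel is a probability density, so the Duhamel operator maps a bound `K` on
`ℝ × [0, T]` to the bound `T K`. Since the Cauchy product in the recursion reproduces the Catalan
recursion, induction gives `λⁱ |Aᵢ|, λⁱ |Bᵢ|, λⁱ |Cᵢ| ≤ M₀ ρⁱ Catᵢ` with `ρ = λ T (M₀ + γ)`.
As `Catᵢ ≤ 4ⁱ` and `4ρ ≤ 1/2` for `λ < 1 / (T (12 M₀ + 10 γ))`, the terms are dominated by
`M₀ 2⁻ⁱ`, whose tails from `N` on sum to `M₀ / 2^(N-1)`.
-/

open MeasureTheory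

/-- The one-dimensional heat kernel `φ_D(x,t) = (4πDt)^{-1/2} exp(−x²/(4Dt))`. -/
noncomputable def heatKernel (D x t : ℝ) : ℝ :=
  (4 * Real.pi * D * t) ^ (-(1 : ℝ) / 2) * Real.exp (-(x ^ 2) / (4 * D * t))

open Finset Set

lemma heatKernel_nonneg {D t : ℝ} (hD : 0 ≤ D) (ht : 0 ≤ t) (x : ℝ) :
    0 ≤ heatKernel D x t :=
  mul_nonneg (Real.rpow_nonneg (by positivity) _) (Real.exp_pos _).le

lemma heatKernel_zero_right (D x : ℝ) : heatKernel D x 0 = 0 := by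
  simp [heatKernel, Real.zero_rpow (by norm_num : -(1 : ℝ) / 2 ≠ 0)]

lemma heatKernel_eq_mul_exp (D x t : ℝ) :
    heatKernel D x t =
      (4 * Real.pi * D * t) ^ (-(1 : ℝ) / 2) * Real.exp (-(4 * D * t)⁻¹ * x ^ 2) := by
  rw [heatKernel]
  ring_nf

lemma integrable_heatKernel {D t : ℝ} (hD : 0 < D) (ht : 0 < t) :
    Integrable fun x ↦ heatKernel D x t := by
  simp only [heatKernel_eq_mul_exp]
  exact (integrable_exp_neg_mul_sq (by positivity)).const_mul _

lemma integral_heatKernel {D t : ℝ} (hD : 0 < D) (ht : 0 < t) :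
    ∫ x, heatKernel D x t = 1 := by
  have h4 : 0 < 4 * Real.pi * D * t := by positivity
  simp only [heatKernel_eq_mul_exp, integral_const_mul, integral_gaussian]
  rw [show Real.pi / (4 * D * t)⁻¹ = 4 * Real.pi * D * t by field_simp, Real.sqrt_eq_rpow,
    ← Real.rpow_add h4]
  norm_num

lemma abs_integral_heatKernel_mul_le {D t K : ℝ} (hD : 0 < D) (ht : 0 ≤ t) (hK : 0 ≤ K)
    (x : ℝ) {h : ℝ → ℝ} (hh : ∀ y, |h y| ≤ K) :
    |∫ y, heatKernel D (x - y) t * h y| ≤ K := by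
  rcases ht.eq_or_lt with rfl | ht
  · simpa [heatKernel_zero_right] using hK
  have hk : Integrable fun y ↦ heatKernel D (x - y) t :=
    (integrable_heatKernel hD ht).comp_sub_left x
  calc |∫ y, heatKernel D (x - y) t * h y|
      ≤ ∫ y, heatKernel D (x - y) t * K := by
        rw [← Real.norm_eq_abs]
        refine norm_integral_le_of_norm_le (hk.mul_const K)
          (Filter.Eventually.of_forall fun y ↦ ?_)
        rw [Real.norm_eq_abs, abs_mul, abs_of_nonneg (heatKernel_nonneg hD.le ht.le _)]
        exact mul_le_mul_of_nonneg_left (hh y) (heatKernel_nonneg hD.le ht.le _)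
    _ = K := by
        rw [integral_mul_const, integral_sub_left_eq_self (fun z ↦ heatKernel D z t),
          integral_heatKernel hD ht, one_mul]

/-- Duhamel's formula: the solution of `u_t = D u_xx + g`, `u(·, 0) = 0`. -/
noncomputable def heatDuhamel (D : ℝ) (g : ℝ → ℝ → ℝ) (x t : ℝ) : ℝ :=
  ∫ s in (0 : ℝ)..t, ∫ y, heatKernel D (x - y) (t - s) * g y s

lemma abs_heatDuhamel_le {D T t K : ℝ} (hD : 0 < D) (ht : t ∈ Icc 0 T) (hK : 0 ≤ K)
    {g : ℝ → ℝ → ℝ} (hg : ∀ y, ∀ s ∈ Icc 0 T, |g y s| ≤ K) (x : ℝ) :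
    |heatDuhamel D g x t| ≤ T * K := by
  have hinner : ∀ s ∈ uIoc 0 t, ‖∫ y, heatKernel D (x - y) (t - s) * g y s‖ ≤ K := by
    intro s hs
    rw [uIoc_of_le ht.1] at hs
    exact abs_integral_heatKernel_mul_le hD (sub_nonneg.2 hs.2) hK x
      fun y ↦ hg y s ⟨hs.1.le, hs.2.trans ht.2⟩
  calc |heatDuhamel D g x t| ≤ K * |t - 0| :=
        intervalIntegral.norm_integral_le_of_norm_le_const hinner
    _ ≤ T * K := by
        rw [sub_zero, abs_of_nonneg ht.1, mul_comm]
        exact mul_le_mul_of_nonneg_right ht.2 hK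

/-- `reactionTerm a b c γ (i - 1)` is the source term of the equations for `Aᵢ, Bᵢ, Cᵢ`. -/
def reactionTerm (a b c : ℕ → ℝ) (γ : ℝ) (m : ℕ) : ℝ :=
  (∑ j ∈ range (m + 1), a j * b (m - j)) - γ * c m

lemma pow_mul_abs_reactionTerm_le {a b c K : ℕ → ℝ} {γ lam : ℝ} {m : ℕ} (hγ : 0 ≤ γ)
    (hlam : 0 ≤ lam) (ha : ∀ j ≤ m, lam ^ j * |a j| ≤ K j)
    (hb : ∀ j ≤ m, lam ^ j * |b j| ≤ K j) (hc : lam ^ m * |c m| ≤ K m) :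
    lam ^ m * |reactionTerm a b c γ m| ≤ (∑ j ∈ range (m + 1), K j * K (m - j)) + γ * K m := by
  have hab : ∀ j ∈ range (m + 1), lam ^ m * |a j * b (m - j)| ≤ K j * K (m - j) := by
    intro j hj
    have hjm : j ≤ m := Nat.lt_succ_iff.1 (mem_range.1 hj)
    calc lam ^ m * |a j * b (m - j)| = (lam ^ j * |a j|) * (lam ^ (m - j) * |b (m - j)|) := by
          rw [abs_mul, ← Nat.add_sub_cancel' hjm, pow_add, Nat.add_sub_cancel_left]; ring
      _ ≤ K j * K (m - j) :=
          mul_le_mul (ha j hjm) (hb _ (Nat.sub_le m j)) (by positivity)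
            ((by positivity : (0 : ℝ) ≤ _).trans (ha j hjm))
  calc lam ^ m * |reactionTerm a b c γ m|
      ≤ lam ^ m * ((∑ j ∈ range (m + 1), |a j * b (m - j)|) + γ * |c m|) := by
        refine mul_le_mul_of_nonneg_left ((abs_sub _ _).trans (add_le_add
          (abs_sum_le_sum_abs _ _) ?_)) (by positivity)
        rw [abs_mul, abs_of_nonneg hγ]
    _ ≤ (∑ j ∈ range (m + 1), K j * K (m - j)) + γ * K m := by
        rw [mul_add, mul_sum, mul_left_comm]
        exact add_le_add (sum_le_sum hab) (mul_le_mul_of_nonneg_left hc hγ)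

lemma catalan_le_four_pow (n : ℕ) : catalan n ≤ 4 ^ n := by
  rw [catalan_eq_centralBinom_div]
  exact (Nat.div_le_self _ _).trans (Nat.centralBinom_le_four_pow n)

lemma catalan_succ_eq_sum_range (n : ℕ) :
    catalan (n + 1) = ∑ j ∈ range (n + 1), catalan j * catalan (n - j) := by
  rw [catalan_succ', Nat.sum_antidiagonal_eq_sum_range_succ (fun i j ↦ catalan i * catalan j)]

lemma catalan_le_catalan_succ (n : ℕ) : catalan n ≤ catalan (n + 1) := by
  rw [catalan_succ_eq_sum_range]
  simpa using single_le_sum (f := fun j ↦ catalan j * catalan (n - j))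
    (fun _ _ ↦ Nat.zero_le _) (mem_range.2 n.succ_pos)

/-- For `ρ = c (M + γ)` this is a supersolution of `u₀ = M`,
`u_{m+1} = c (∑_{j ≤ m} u_j u_{m-j} + γ u_m)`. -/
def catalanMajorant (M ρ : ℝ) (i : ℕ) : ℝ :=
  M * ρ ^ i * catalan i

lemma catalanMajorant_nonneg {M ρ : ℝ} (hM : 0 ≤ M) (hρ : 0 ≤ ρ) (i : ℕ) :
    0 ≤ catalanMajorant M ρ i := by
  unfold catalanMajorant; positivity

lemma sum_catalanMajorant_mul (M ρ : ℝ) (m : ℕ) :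
    ∑ j ∈ range (m + 1), catalanMajorant M ρ j * catalanMajorant M ρ (m - j)
      = M ^ 2 * ρ ^ m * catalan (m + 1) := by
  rw [catalan_succ_eq_sum_range, Nat.cast_sum, mul_sum]
  refine sum_congr rfl fun j hj ↦ ?_
  rw [← Nat.add_sub_cancel' (Nat.lt_succ_iff.1 (mem_range.1 hj))]
  simp only [catalanMajorant, Nat.add_sub_cancel_left, pow_add, Nat.cast_mul]
  ring

lemma mul_sum_catalanMajorant_le {M γ c : ℝ} (hM : 0 ≤ M) (hγ : 0 ≤ γ) (hc : 0 ≤ c) (m : ℕ) :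
    c * ((∑ j ∈ range (m + 1),
        catalanMajorant M (c * (M + γ)) j * catalanMajorant M (c * (M + γ)) (m - j))
      + γ * catalanMajorant M (c * (M + γ)) m)
      ≤ catalanMajorant M (c * (M + γ)) (m + 1) := by
  set ρ := c * (M + γ)
  have hcat : (catalan m : ℝ) ≤ catalan (m + 1) := by exact_mod_cast catalan_le_catalan_succ m
  have hγterm : γ * catalanMajorant M ρ m ≤ γ * (M * ρ ^ m * catalan (m + 1)) := by
    unfold catalanMajorant
    gcongr
  calc _ ≤ c * (M ^ 2 * ρ ^ m * catalan (m + 1) + γ * (M * ρ ^ m * catalan (m + 1))) := by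
        rw [sum_catalanMajorant_mul]; gcongr
    _ = catalanMajorant M ρ (m + 1) := by
        simp only [catalanMajorant, ρ, pow_succ]; ring

lemma catalanMajorant_le_half_pow {M ρ : ℝ} (hM : 0 ≤ M) (hρ : 0 ≤ ρ) (hρ8 : ρ ≤ 1 / 8)
    (i : ℕ) : catalanMajorant M ρ i ≤ M * (1 / 2) ^ i := by
  have hcat : (catalan i : ℝ) ≤ 4 ^ i := by exact_mod_cast catalan_le_four_pow i
  calc catalanMajorant M ρ i ≤ M * (ρ ^ i * 4 ^ i) := by
        rw [catalanMajorant, mul_assoc]; gcongr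
    _ = M * (4 * ρ) ^ i := by rw [← mul_pow, mul_comm ρ]
    _ ≤ M * (1 / 2) ^ i := by gcongr; linarith

lemma pow_mul_abs_le_catalanMajorant {T γ lam M : ℝ} (hγ : 0 ≤ γ) (hlam : 0 < lam)
    (hT : 0 ≤ T) (hM : 0 ≤ M) {A B C : ℕ → ℝ → ℝ → ℝ}
    (h0 : ∀ x, ∀ t ∈ Icc 0 T, |A 0 x t| ≤ M ∧ |B 0 x t| ≤ M ∧ |C 0 x t| ≤ M)
    (hsucc : ∀ m K, 0 ≤ K → (∀ y, ∀ s ∈ Icc 0 T,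
        |reactionTerm (A · y s) (B · y s) (C · y s) γ m| ≤ K) →
      ∀ x, ∀ t ∈ Icc 0 T, |A (m + 1) x t| ≤ T * K ∧ |B (m + 1) x t| ≤ T * K ∧
        |C (m + 1) x t| ≤ T * K)
    (i : ℕ) (x : ℝ) {t : ℝ} (ht : t ∈ Icc 0 T) :
    lam ^ i * |A i x t| ≤ catalanMajorant M (lam * T * (M + γ)) i ∧
      lam ^ i * |B i x t| ≤ catalanMajorant M (lam * T * (M + γ)) i ∧
      lam ^ i * |C i x t| ≤ catalanMajorant M (lam * T * (M + γ)) i := by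
  set K := catalanMajorant M (lam * T * (M + γ))
  have hK0 : ∀ j, 0 ≤ K j := catalanMajorant_nonneg hM (by positivity)
  induction i using Nat.strong_induction_on generalizing x t with
  | _ i ih =>
  cases i with
  | zero => simpa [K, catalanMajorant] using h0 x t ht
  | succ m =>
    have hm : 0 < lam ^ m := pow_pos hlam m
    set S := (∑ j ∈ range (m + 1), K j * K (m - j)) + γ * K m
    have hreact : ∀ y, ∀ s ∈ Icc 0 T,
        |reactionTerm (A · y s) (B · y s) (C · y s) γ m| ≤ S / lam ^ m := by
      intro y s hs
      rw [le_div_iff₀' hm]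
      exact pow_mul_abs_reactionTerm_le hγ hlam.le
        (fun j hj ↦ (ih j (Nat.lt_succ_of_le hj) y hs).1)
        (fun j hj ↦ (ih j (Nat.lt_succ_of_le hj) y hs).2.1) (ih m m.lt_succ_self y hs).2.2
    have hS : 0 ≤ S / lam ^ m := div_nonneg (add_nonneg
      (sum_nonneg fun j _ ↦ mul_nonneg (hK0 j) (hK0 _)) (mul_nonneg hγ (hK0 m))) hm.le
    have hK : lam ^ (m + 1) * (T * (S / lam ^ m)) ≤ K (m + 1) := by
      calc lam ^ (m + 1) * (T * (S / lam ^ m)) = lam * T * S := by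
            field_simp; ring
        _ ≤ K (m + 1) := mul_sum_catalanMajorant_le hM hγ (by positivity) m
    obtain ⟨hA, hB, hC⟩ := hsucc m _ hS hreact x t ht
    exact ⟨(mul_le_mul_of_nonneg_left hA (by positivity)).trans hK,
      (mul_le_mul_of_nonneg_left hB (by positivity)).trans hK,
      (mul_le_mul_of_nonneg_left hC (by positivity)).trans hK⟩

lemma mul_mul_add_le_of_lt_one_div {lam T M γ : ℝ} (hlam : 0 ≤ lam) (hT : 0 ≤ T) (hM : 0 ≤ M)
    (hγ : 0 ≤ γ) (h : lam < 1 / (T * (12 * M + 10 * γ))) : lam * T * (M + γ) ≤ 1 / 8 := by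
  have hlt : lam * (T * (12 * M + 10 * γ)) < 1 := by
    rcases (by positivity : 0 ≤ T * (12 * M + 10 * γ)).eq_or_lt with hX | hX
    · rw [← hX, div_zero] at h; linarith
    · exact (lt_div_iff₀ hX).1 h
  nlinarith [mul_nonneg (mul_nonneg hlam hT) (by positivity : 0 ≤ 4 * M + 2 * γ)]

lemma tsum_nat_add_le_of_le_half_pow {f : ℕ → ℝ} {M : ℝ} (hf0 : ∀ i, 0 ≤ f i)
    (hf : ∀ i, f i ≤ M * (1 / 2) ^ i) (N : ℕ) :
    ∑' i, f (N + i) ≤ M / 2 ^ ((N : ℤ) - 1) := by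
  have hle : ∀ i, f (N + i) ≤ M * (1 / 2) ^ N * (1 / 2) ^ i := fun i ↦ by
    rw [mul_assoc, ← pow_add]; exact hf _
  have hgeo := summable_geometric_two.mul_left (M * (1 / 2) ^ N)
  calc ∑' i, f (N + i) ≤ ∑' i, M * (1 / 2) ^ N * (1 / 2) ^ i :=
        (hgeo.of_nonneg_of_le (fun i ↦ hf0 _) hle).tsum_le_tsum hle hgeo
    _ = M / 2 ^ ((N : ℤ) - 1) := by
        rw [tsum_mul_left, tsum_geometric_two, zpow_sub₀ two_ne_zero, zpow_natCast,
          one_div_pow]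
        field_simp

lemma summable_and_iSup_tsum_le {T lam M : ℝ} (hT : 0 ≤ T) (hlam : 0 ≤ lam)
    {Z : ℕ → ℝ → ℝ → ℝ} (hZ : ∀ i x, ∀ t ∈ Icc 0 T, lam ^ i * |Z i x t| ≤ M * (1 / 2) ^ i) :
    (∀ x, ∀ t ∈ Icc 0 T, Summable fun i ↦ |lam ^ i * Z i x t|) ∧
      ∀ N : ℕ, (⨆ p : ℝ × Icc 0 T, ∑' i, lam ^ (N + i) * |Z (N + i) p.1 p.2|)
        ≤ M / 2 ^ ((N : ℤ) - 1) := by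
  have : Nonempty (Icc 0 T) := ⟨⟨0, left_mem_Icc.2 hT⟩⟩
  refine ⟨fun x t ht ↦ ?_, fun N ↦ ciSup_le fun p ↦ ?_⟩
  · refine (summable_geometric_two.mul_left M).of_nonneg_of_le (fun i ↦ abs_nonneg _)
      fun i ↦ ?_
    rw [abs_mul, abs_pow, abs_of_nonneg hlam]
    exact hZ i x t ht
  · exact tsum_nat_add_le_of_le_half_pow (fun i ↦ by positivity) (fun i ↦ hZ i _ _ p.2.2) N

lemma abs_le_iSup_abs {T : ℝ} {f : ℝ → ℝ → ℝ}
    (hf : ∃ K, ∀ x, ∀ t ∈ Icc 0 T, |f x t| ≤ K) {x t : ℝ} (ht : t ∈ Icc 0 T) :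
    |f x t| ≤ ⨆ p : ℝ × Icc 0 T, |f p.1 p.2| := by
  obtain ⟨K, hK⟩ := hf
  exact le_ciSup (f := fun p : ℝ × Icc 0 T ↦ |f p.1 p.2|)
    ⟨K, by rintro _ ⟨p, rfl⟩; exact hK _ _ p.2.2⟩ (x, ⟨t, ht⟩)

theorem perturbation_series_uniform_convergence_general
    (T DA DB DC γ : ℝ) (hT : 0 < T) (hDA : 0 < DA) (hDB : 0 < DB) (hDC : 0 < DC)
    (hγ : 0 ≤ γ)
    (fA fB : ℝ → ℝ → ℝ)
    (hfAb : ∃ K, ∀ x : ℝ, ∀ t ∈ Set.Icc (0 : ℝ) T, |fA x t| ≤ K)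
    (hfBb : ∃ K, ∀ x : ℝ, ∀ t ∈ Set.Icc (0 : ℝ) T, |fB x t| ≤ K)
    (M₀ : ℝ)
    (hM₀ : M₀ = max (T * ⨆ p : ℝ × Set.Icc (0 : ℝ) T, |fA p.1 p.2|)
                    (T * ⨆ p : ℝ × Set.Icc (0 : ℝ) T, |fB p.1 p.2|))
    (A B C : ℕ → ℝ → ℝ → ℝ)
    (hA0 : ∀ x : ℝ, ∀ t ∈ Set.Icc (0 : ℝ) T,
      A 0 x t = ∫ s in (0 : ℝ)..t, ∫ y : ℝ, heatKernel DA (x - y) (t - s) * fA y s)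
    (hB0 : ∀ x : ℝ, ∀ t ∈ Set.Icc (0 : ℝ) T,
      B 0 x t = ∫ s in (0 : ℝ)..t, ∫ y : ℝ, heatKernel DB (x - y) (t - s) * fB y s)
    (hC0 : ∀ x : ℝ, ∀ t ∈ Set.Icc (0 : ℝ) T, C 0 x t = 0)
    (hArec : ∀ i : ℕ, 1 ≤ i → ∀ x : ℝ, ∀ t ∈ Set.Icc (0 : ℝ) T,
      A i x t = -∫ s in (0 : ℝ)..t, ∫ y : ℝ, heatKernel DA (x - y) (t - s) *
        ((∑ j ∈ Finset.range i, A j y s * B (i - 1 - j) y s) - γ * C (i - 1) y s))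
    (hBrec : ∀ i : ℕ, 1 ≤ i → ∀ x : ℝ, ∀ t ∈ Set.Icc (0 : ℝ) T,
      B i x t = -∫ s in (0 : ℝ)..t, ∫ y : ℝ, heatKernel DB (x - y) (t - s) *
        ((∑ j ∈ Finset.range i, A j y s * B (i - 1 - j) y s) - γ * C (i - 1) y s))
    (hCrec : ∀ i : ℕ, 1 ≤ i → ∀ x : ℝ, ∀ t ∈ Set.Icc (0 : ℝ) T,
      C i x t = ∫ s in (0 : ℝ)..t, ∫ y : ℝ, heatKernel DC (x - y) (t - s) *
        ((∑ j ∈ Finset.range i, A j y s * B (i - 1 - j) y s) - γ * C (i - 1) y s)) :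
    ∀ lam : ℝ, 0 < lam → lam < 1 / (T * (12 * M₀ + 10 * γ)) →
      ((∀ x : ℝ, ∀ t ∈ Set.Icc (0 : ℝ) T, Summable fun i : ℕ => |lam ^ i * A i x t|) ∧
        ∀ N : ℕ, (⨆ p : ℝ × Set.Icc (0 : ℝ) T,
            ∑' i : ℕ, lam ^ (N + i) * |A (N + i) p.1 p.2|) ≤ M₀ / (2 : ℝ) ^ ((N : ℤ) - 1)) ∧
      ((∀ x : ℝ, ∀ t ∈ Set.Icc (0 : ℝ) T, Summable fun i : ℕ => |lam ^ i * B i x t|) ∧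
        ∀ N : ℕ, (⨆ p : ℝ × Set.Icc (0 : ℝ) T,
            ∑' i : ℕ, lam ^ (N + i) * |B (N + i) p.1 p.2|) ≤ M₀ / (2 : ℝ) ^ ((N : ℤ) - 1)) ∧
      ((∀ x : ℝ, ∀ t ∈ Set.Icc (0 : ℝ) T, Summable fun i : ℕ => |lam ^ i * C i x t|) ∧
        ∀ N : ℕ, (⨆ p : ℝ × Set.Icc (0 : ℝ) T,
            ∑' i : ℕ, lam ^ (N + i) * |C (N + i) p.1 p.2|) ≤ M₀ / (2 : ℝ) ^ ((N : ℤ) - 1)) := by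
  intro lam hlam hlam_lt
  have hfA (y : ℝ) {s : ℝ} (hs : s ∈ Icc 0 T) := abs_le_iSup_abs (x := y) hfAb hs
  have hfB (y : ℝ) {s : ℝ} (hs : s ∈ Icc 0 T) := abs_le_iSup_abs (x := y) hfBb hs
  have hSA0 := (abs_nonneg _).trans (hfA 0 (left_mem_Icc.2 hT.le))
  have hSB0 := (abs_nonneg _).trans (hfB 0 (left_mem_Icc.2 hT.le))
  have hSA : T * _ ≤ M₀ := hM₀ ▸ le_max_left _ _
  have hSB : T * _ ≤ M₀ := hM₀ ▸ le_max_right _ _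
  have hM : 0 ≤ M₀ := (mul_nonneg hT.le hSA0).trans hSA
  have hρ := mul_mul_add_le_of_lt_one_div hlam.le hT.le hM hγ hlam_lt
  have hbound := pow_mul_abs_le_catalanMajorant hγ hlam hT.le hM (A := A) (B := B) (C := C)
    (fun x t ht ↦ ⟨by rw [hA0 x t ht]; exact (abs_heatDuhamel_le hDA ht hSA0 hfA x).trans hSA,
      by rw [hB0 x t ht]; exact (abs_heatDuhamel_le hDB ht hSB0 hfB x).trans hSB,
      by rw [hC0 x t ht, abs_zero]; exact hM⟩)
    (fun m K hK hg x t ht ↦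
      ⟨by rw [hArec _ m.succ_pos x t ht, abs_neg]; exact abs_heatDuhamel_le hDA ht hK hg x,
        by rw [hBrec _ m.succ_pos x t ht, abs_neg]; exact abs_heatDuhamel_le hDB ht hK hg x,
        by rw [hCrec _ m.succ_pos x t ht]; exact abs_heatDuhamel_le hDC ht hK hg x⟩)
  have hgeo := catalanMajorant_le_half_pow hM (by positivity) hρ
  exact ⟨summable_and_iSup_tsum_le hT.le hlam.le fun i x t ht ↦ (hbound i x ht).1.trans (hgeo i),
    summable_and_iSup_tsum_le hT.le hlam.le fun i x t ht ↦ (hbound i x ht).2.1.trans (hgeo i),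
    summable_and_iSup_tsum_le hT.le hlam.le fun i x t ht ↦ (hbound i x ht).2.2.trans (hgeo i)⟩

/-- Uniform convergence of the perturbation series for the reaction–diffusion system
`A + B ⇌ C`: under the heat-kernel convolution recursion, for every
`0 < λ < 1/(T(12M₀ + 10γ))` the series `Σᵢ λ^i A_i(x,t)` converges absolutely for every
`(x,t) ∈ ℝ × [0,T]`, uniformly, with the tail bound
`sup_{x, t∈[0,T]} Σ_{i≥N} λ^i |A_i(x,t)| ≤ M₀/2^{N−1}` for every `N ≥ 0`;
and likewise for `B_i` and `C_i`. -/
theorem perturbation_series_uniform_convergence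
    (T DA DB DC γ : ℝ) (hT : 0 < T) (hDA : 0 < DA) (hDB : 0 < DB) (hDC : 0 < DC)
    (hγ : 0 ≤ γ)
    (fA fB : ℝ → ℝ → ℝ)
    (hfAm : Measurable (Function.uncurry fA)) (hfBm : Measurable (Function.uncurry fB))
    (hfAb : ∃ K, ∀ x : ℝ, ∀ t ∈ Set.Icc (0 : ℝ) T, |fA x t| ≤ K)
    (hfBb : ∃ K, ∀ x : ℝ, ∀ t ∈ Set.Icc (0 : ℝ) T, |fB x t| ≤ K)
    (M₀ : ℝ)
    (hM₀ : M₀ = max (T * ⨆ p : ℝ × Set.Icc (0 : ℝ) T, |fA p.1 p.2|)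
                    (T * ⨆ p : ℝ × Set.Icc (0 : ℝ) T, |fB p.1 p.2|))
    (hM₀pos : 0 < M₀)
    (A B C : ℕ → ℝ → ℝ → ℝ)
    (hAm : ∀ i, Measurable (Function.uncurry (A i)))
    (hBm : ∀ i, Measurable (Function.uncurry (B i)))
    (hCm : ∀ i, Measurable (Function.uncurry (C i)))
    (hAb : ∀ i, ∃ K, ∀ x : ℝ, ∀ t ∈ Set.Icc (0 : ℝ) T, |A i x t| ≤ K)
    (hBb : ∀ i, ∃ K, ∀ x : ℝ, ∀ t ∈ Set.Icc (0 : ℝ) T, |B i x t| ≤ K)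
    (hCb : ∀ i, ∃ K, ∀ x : ℝ, ∀ t ∈ Set.Icc (0 : ℝ) T, |C i x t| ≤ K)
    (hA0 : ∀ x : ℝ, ∀ t ∈ Set.Icc (0 : ℝ) T,
      A 0 x t = ∫ s in (0 : ℝ)..t, ∫ y : ℝ, heatKernel DA (x - y) (t - s) * fA y s)
    (hB0 : ∀ x : ℝ, ∀ t ∈ Set.Icc (0 : ℝ) T,
      B 0 x t = ∫ s in (0 : ℝ)..t, ∫ y : ℝ, heatKernel DB (x - y) (t - s) * fB y s)
    (hC0 : ∀ x : ℝ, ∀ t ∈ Set.Icc (0 : ℝ) T, C 0 x t = 0)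
    (hArec : ∀ i : ℕ, 1 ≤ i → ∀ x : ℝ, ∀ t ∈ Set.Icc (0 : ℝ) T,
      A i x t = -∫ s in (0 : ℝ)..t, ∫ y : ℝ, heatKernel DA (x - y) (t - s) *
        ((∑ j ∈ Finset.range i, A j y s * B (i - 1 - j) y s) - γ * C (i - 1) y s))
    (hBrec : ∀ i : ℕ, 1 ≤ i → ∀ x : ℝ, ∀ t ∈ Set.Icc (0 : ℝ) T,
      B i x t = -∫ s in (0 : ℝ)..t, ∫ y : ℝ, heatKernel DB (x - y) (t - s) *
        ((∑ j ∈ Finset.range i, A j y s * B (i - 1 - j) y s) - γ * C (i - 1) y s))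
    (hCrec : ∀ i : ℕ, 1 ≤ i → ∀ x : ℝ, ∀ t ∈ Set.Icc (0 : ℝ) T,
      C i x t = ∫ s in (0 : ℝ)..t, ∫ y : ℝ, heatKernel DC (x - y) (t - s) *
        ((∑ j ∈ Finset.range i, A j y s * B (i - 1 - j) y s) - γ * C (i - 1) y s)) :
    ∀ lam : ℝ, 0 < lam → lam < 1 / (T * (12 * M₀ + 10 * γ)) →
      ((∀ x : ℝ, ∀ t ∈ Set.Icc (0 : ℝ) T, Summable fun i : ℕ => |lam ^ i * A i x t|) ∧
        ∀ N : ℕ, (⨆ p : ℝ × Set.Icc (0 : ℝ) T,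
            ∑' i : ℕ, lam ^ (N + i) * |A (N + i) p.1 p.2|) ≤ M₀ / (2 : ℝ) ^ ((N : ℤ) - 1)) ∧
      ((∀ x : ℝ, ∀ t ∈ Set.Icc (0 : ℝ) T, Summable fun i : ℕ => |lam ^ i * B i x t|) ∧
        ∀ N : ℕ, (⨆ p : ℝ × Set.Icc (0 : ℝ) T,
            ∑' i : ℕ, lam ^ (N + i) * |B (N + i) p.1 p.2|) ≤ M₀ / (2 : ℝ) ^ ((N : ℤ) - 1)) ∧
      ((∀ x : ℝ, ∀ t ∈ Set.Icc (0 : ℝ) T, Summable fun i : ℕ => |lam ^ i * C i x t|) ∧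
        ∀ N : ℕ, (⨆ p : ℝ × Set.Icc (0 : ℝ) T,
            ∑' i : ℕ, lam ^ (N + i) * |C (N + i) p.1 p.2|) ≤ M₀ / (2 : ℝ) ^ ((N : ℤ) - 1)) :=
  perturbation_series_uniform_convergence_general T DA DB DC γ hT hDA hDB hDC hγ fA fB hfAb hfBb M₀
    hM₀ A B C hA0 hB0 hC0 hArec hBrec hCrec
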